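/- arXiv:2408.08457 — 4 statements merged into one kernel-verified Lean document; each statement's English description precedes it below -/
import Mathlib

section
/- Let G=(V,E) be a finite simple graph, let μ be the Bernoulli bond-percolation product measure on Ω={0,1}^E, and let (C₁,C₂) be sampled from μ×μ. Let T be any decision tree for pairs of configurations and let S=S(C₁,C₂) be the random edge set it builds. Then the two random configurations C₁→_S C₂ and C₁→_{E∖S} C₂ are independent, and each has distribution μ. -/
/-!
Write `Φ(C₁, C₂) = (C₁ →_S C₂, C₁ →_{E∖S} C₂)`. On `E∖S` the map `Φ` just exchanges the two
configurations, so it preserves the product weight `μ(C₁) μ(C₂)`. It is also injective: once `S`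
is known, `Φ` is an involution, and `S` can be read off the output by running the tree with the
two revealed values exchanged at `S̄`-nodes, which follows the same path as the original run.
So `Φ` is a weight-preserving bijection of `Ω × Ω`, i.e. `Φ(C₁, C₂) ∼ μ × μ`.
-/

namespace DTPerc

variable {E : Type*} [Fintype E] [DecidableEq E]

/-- Bernoulli product weight of a configuration. -/
noncomputable def wt (p : E → ℝ) (C : E → Bool) : ℝ :=
  ∏ e, if C e then p e else 1 - p e

/-- Probability of an event under the Bernoulli product measure. -/
noncomputable def Pr (p : E → ℝ) (A : Set (E → Bool)) : ℝ :=
  ∑ C : E → Bool, A.indicator (wt p) C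

/-- Probability of an event for an independent pair `(C₁, C₂) ~ μ × μ`. -/
noncomputable def Pr2 (p : E → ℝ) (A : Set ((E → Bool) × (E → Bool))) : ℝ :=
  ∑ x : (E → Bool) × (E → Bool), A.indicator (fun y => wt p y.1 * wt p y.2) x

/-- A decision tree for pairs of configurations: every decision node queries an edge,
decides whether it goes to `S` (`toS = true`) or to `S̄`, and has four children indexed
by the pair of revealed values of the edge in the two configurations. -/
inductive PairTree (E : Type u) : Type u
  | leaf : PairTree E
  | node (e : E) (toS : Bool) (child : Bool → Bool → PairTree E) : PairTree E

/-- The edges queried along any root-to-leaf path are pairwise distinct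
(`used` is the set of edges already queried above the current node). -/
def PairTree.valid : PairTree E → Finset E → Prop
  | .leaf, _ => True
  | .node e _ child, used =>
      e ∉ used ∧ ∀ b₁ b₂ : Bool, (child b₁ b₂).valid (insert e used)

/-- The set `S(C₁, C₂)` built by the decision tree. -/
def PairTree.buildS : PairTree E → (E → Bool) → (E → Bool) → Finset E
  | .leaf, _, _ => ∅
  | .node e toS child, C₁, C₂ =>
      let rest := (child (C₁ e) (C₂ e)).buildS C₁ C₂
      if toS then insert e rest else rest

/-- `C₁ →_S C₂`: the configuration equal to `C₁` on `S` and to `C₂` off `S`. -/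
def splice (S : Finset E) (C₁ C₂ : E → Bool) : E → Bool :=
  fun e => if e ∈ S then C₁ e else C₂ e

theorem splice_splice_compl (S : Finset E) (C₁ C₂ : E → Bool) :
    splice S (splice S C₁ C₂) (splice Sᶜ C₁ C₂) = C₁ := by
  funext e
  by_cases h : e ∈ S <;> simp [splice, h]

theorem splice_compl_splice_compl (S : Finset E) (C₁ C₂ : E → Bool) :
    splice Sᶜ (splice S C₁ C₂) (splice Sᶜ C₁ C₂) = C₂ := by
  funext e
  by_cases h : e ∈ S <;> simp [splice, h]

namespace PairTree

/-- At an `S̄`-node the output of `spliceMap` carries the two revealed values exchanged, so the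
decoder reads them exchanged back. -/
def decoder : PairTree E → PairTree E
  | .leaf => .leaf
  | .node e toS child =>
      .node e toS fun b₁ b₂ => if toS then (child b₁ b₂).decoder else (child b₂ b₁).decoder

omit [Fintype E] in
theorem disjoint_buildS {T : PairTree E} {used : Finset E} (hT : T.valid used)
    (C₁ C₂ : E → Bool) : Disjoint (T.buildS C₁ C₂) used := by
  induction T generalizing used with
  | leaf => simp [buildS]
  | node e toS child ih =>
    obtain ⟨he, hchild⟩ := hT
    have hrest := ih (C₁ e) (C₂ e) (hchild (C₁ e) (C₂ e))
    rw [Finset.disjoint_insert_right] at hrest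
    cases toS
    · exact hrest.2
    · exact Finset.disjoint_insert_left.mpr ⟨he, hrest.2⟩

omit [Fintype E] in
theorem notMem_buildS_of_valid_insert {T : PairTree E} {e : E} {used : Finset E}
    (hT : T.valid (insert e used)) (C₁ C₂ : E → Bool) : e ∉ T.buildS C₁ C₂ :=
  Finset.disjoint_right.mp (disjoint_buildS hT C₁ C₂) (Finset.mem_insert_self e used)

def spliceMap (T : PairTree E) (x : (E → Bool) × (E → Bool)) : (E → Bool) × (E → Bool) :=
  (splice (T.buildS x.1 x.2) x.1 x.2, splice (T.buildS x.1 x.2)ᶜ x.1 x.2)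

/-- Stated for every `y` agreeing with the output off `used` because the output for the child
tree differs from the one for `T` at the queried edge. -/
theorem buildS_decoder {T : PairTree E} {used : Finset E} (hT : T.valid used)
    (x y : (E → Bool) × (E → Bool)) (hy : ∀ a ∉ used, y.1 a = (T.spliceMap x).1 a ∧
      y.2 a = (T.spliceMap x).2 a) :
    T.decoder.buildS y.1 y.2 = T.buildS x.1 x.2 := by
  induction T generalizing used with
  | leaf => rfl
  | node e toS child ih =>
    obtain ⟨he, hchild⟩ := hT
    have hc := hchild (x.1 e) (x.2 e)
    have he_c := notMem_buildS_of_valid_insert hc x.1 x.2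
    have hy_c : ∀ a ∉ insert e used, y.1 a = ((child (x.1 e) (x.2 e)).spliceMap x).1 a ∧
        y.2 a = ((child (x.1 e) (x.2 e)).spliceMap x).2 a := by
      intro a ha
      rw [Finset.mem_insert, not_or] at ha
      cases toS <;> simpa [spliceMap, splice, buildS, ha.1] using hy a ha.2
    cases toS
    · obtain ⟨h₁, h₂⟩ : y.1 e = x.2 e ∧ y.2 e = x.1 e := by
        simpa [spliceMap, splice, buildS, he_c] using hy e he
      simp [decoder, buildS, h₁, h₂, ih _ _ hc hy_c]
    · obtain ⟨h₁, h₂⟩ : y.1 e = x.1 e ∧ y.2 e = x.2 e := by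
        simpa [spliceMap, splice, buildS] using hy e he
      simp [decoder, buildS, h₁, h₂, ih _ _ hc hy_c]

theorem decoder_spliceMap {T : PairTree E} (hT : T.valid ∅) (x : (E → Bool) × (E → Bool)) :
    T.decoder.spliceMap (T.spliceMap x) = x := by
  conv_lhs => rw [spliceMap, buildS_decoder hT x (T.spliceMap x) (by simp)]
  exact Prod.ext (splice_splice_compl _ x.1 x.2) (splice_compl_splice_compl _ x.1 x.2)

theorem spliceMap_injective {T : PairTree E} (hT : T.valid ∅) : Function.Injective T.spliceMap :=
  Function.LeftInverse.injective (decoder_spliceMap hT)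

end PairTree

theorem wt_splice_mul_wt_splice_compl (p : E → ℝ) (S : Finset E) (C₁ C₂ : E → Bool) :
    wt p (splice S C₁ C₂) * wt p (splice Sᶜ C₁ C₂) = wt p C₁ * wt p C₂ := by
  simp only [wt, ← Finset.prod_mul_distrib]
  refine Finset.prod_congr rfl fun e _ => ?_
  by_cases h : e ∈ S <;> simp [splice, h, mul_comm]

theorem sum_wt (p : E → ℝ) : ∑ C : E → Bool, wt p C = 1 := by
  simp only [wt, ← Fintype.prod_sum fun e (b : Bool) => if b then p e else 1 - p e]
  simp

theorem Pr_univ (p : E → ℝ) : Pr p Set.univ = 1 := by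
  rw [Pr, Set.indicator_univ, sum_wt]

theorem Pr2_prod (p : E → ℝ) (A B : Set (E → Bool)) : Pr2 p (A ×ˢ B) = Pr p A * Pr p B := by
  rw [Pr2, Pr, Pr, Finset.sum_mul_sum, Fintype.sum_prod_type]
  refine Fintype.sum_congr _ _ fun C₁ => Fintype.sum_congr _ _ fun C₂ => ?_
  by_cases h₁ : C₁ ∈ A <;> by_cases h₂ : C₂ ∈ B <;> simp [h₁, h₂]

theorem Pr2_preimage_of_injective {f : (E → Bool) × (E → Bool) → (E → Bool) × (E → Bool)}
    (hf : Function.Injective f) (p : E → ℝ)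
    (hwt : ∀ x, wt p (f x).1 * wt p (f x).2 = wt p x.1 * wt p x.2)
    (A : Set ((E → Bool) × (E → Bool))) :
    Pr2 p (f ⁻¹' A) = Pr2 p A := by
  have hcomp : (fun y : (E → Bool) × (E → Bool) => wt p y.1 * wt p y.2) =
      (fun y => wt p y.1 * wt p y.2) ∘ f := funext fun x => (hwt x).symm
  rw [Pr2, hcomp]
  simp only [Set.indicator_comp_right]
  exact (Finite.injective_iff_bijective.mp hf).sum_comp (A.indicator fun y => wt p y.1 * wt p y.2)

theorem PairTree.Pr2_preimage_spliceMap {T : PairTree E} (hT : T.valid ∅) (p : E → ℝ)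
    (A : Set ((E → Bool) × (E → Bool))) : Pr2 p (T.spliceMap ⁻¹' A) = Pr2 p A :=
  Pr2_preimage_of_injective (PairTree.spliceMap_injective hT) p
    (fun x => wt_splice_mul_wt_splice_compl p (T.buildS x.1 x.2) x.1 x.2) A

theorem decision_tree_independence_general
    {V : Type*} [Fintype V] [DecidableEq V] (G : SimpleGraph V) [DecidableRel G.Adj]
    (p : G.edgeSet → ℝ)
    (T : PairTree G.edgeSet) (hT : T.valid ∅) :
    (∀ A : Set (G.edgeSet → Bool),
      Pr2 p {x | splice (T.buildS x.1 x.2) x.1 x.2 ∈ A} = Pr p A) ∧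
    (∀ B : Set (G.edgeSet → Bool),
      Pr2 p {x | splice (T.buildS x.1 x.2)ᶜ x.1 x.2 ∈ B} = Pr p B) ∧
    (∀ A B : Set (G.edgeSet → Bool),
      Pr2 p {x | splice (T.buildS x.1 x.2) x.1 x.2 ∈ A ∧
                 splice (T.buildS x.1 x.2)ᶜ x.1 x.2 ∈ B} = Pr p A * Pr p B) := by
  have joint : ∀ A B : Set (G.edgeSet → Bool),
      Pr2 p {x | splice (T.buildS x.1 x.2) x.1 x.2 ∈ A ∧
        splice (T.buildS x.1 x.2)ᶜ x.1 x.2 ∈ B} = Pr p A * Pr p B := fun A B => by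
    rw [← Pr2_prod, ← PairTree.Pr2_preimage_spliceMap hT p (A ×ˢ B)]
    rfl
  refine ⟨fun A => ?_, fun B => ?_, joint⟩
  · simpa [Pr_univ] using joint A Set.univ
  · simpa [Pr_univ] using joint Set.univ B

theorem decision_tree_independence
    {V : Type*} [Fintype V] [DecidableEq V] (G : SimpleGraph V) [DecidableRel G.Adj]
    (p : G.edgeSet → ℝ) (hp : ∀ e, 0 ≤ p e ∧ p e ≤ 1)
    (T : PairTree G.edgeSet) (hT : T.valid ∅) :
    (∀ A : Set (G.edgeSet → Bool),
      Pr2 p {x | splice (T.buildS x.1 x.2) x.1 x.2 ∈ A} = Pr p A) ∧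
    (∀ B : Set (G.edgeSet → Bool),
      Pr2 p {x | splice (T.buildS x.1 x.2)ᶜ x.1 x.2 ∈ B} = Pr p B) ∧
    (∀ A B : Set (G.edgeSet → Bool),
      Pr2 p {x | splice (T.buildS x.1 x.2) x.1 x.2 ∈ A ∧
                 splice (T.buildS x.1 x.2)ᶜ x.1 x.2 ∈ B} = Pr p A * Pr p B) :=
  decision_tree_independence_general G p T hT

end DTPerc
end

section
/- (Main Lemma for generating decision trees.) Let E be a finite set, and for each e∈E let (Ω₁(e),μ₁(e)) and (Ω₂(e),μ₂(e)) be finite probability spaces. Let A ⊆ Π_{e∈E}(Ω₁(e) ⊔ Ω₂(e)) be an event such that for every e∈E and every configuration C ∈ Π_{e∈E}(Ω₁(e) ⊔ Ω₂(e)), setting X_i(C,e) := {x∈Ω_i(e) : C⟨e:=x⟩∈A} for i=1,2, one has μ₁(e)(X₁(C,e)) ≤ μ₂(e)(X₂(C,e)). Then for every generating decision tree T with random output configuration C, P(C₁∈A) ≤ P(C∈A) ≤ P(C₂∈A), where C₁ is the random configuration with distribution Π_{e∈E} μ₁(e) and C₂ is the random configuration with distribution Π_{e∈E} μ₂(e).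 -/
/-!
Fix the edges outside a set `rem` to the values of a configuration `C₀` and let the edges of
`rem` be sampled. For a tree that queries `e` first, the probability of `A` is an average over
the value at `e` of the same quantity for its subtrees; the product measures `Π μ₁(e)` and
`Π μ₂(e)` split in the same way for any `e ∈ rem`, since a product may be expanded along any
coordinate. Induction on the tree therefore reduces both inequalities to one exchange: under a
product measure on the other edges, which does not see `e`, replacing a `μ₁(e)`-sample by a
`μ₂(e)`-sample can only increase the probability of `A`, and this is the hypothesis on `A`
integrated against that product.
-/

namespace GenDT

/-- A generating decision tree: every node queries an edge and either samples its value
from the first probability space (`node1`) or the second one (`node2`), with one child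
for each possible sampled value. -/
inductive GTree (E : Type u) (Ω₁ : E → Type v) (Ω₂ : E → Type w) : Type (max u v w)
  | leaf : GTree E Ω₁ Ω₂
  | node1 (e : E) (child : Ω₁ e → GTree E Ω₁ Ω₂) : GTree E Ω₁ Ω₂
  | node2 (e : E) (child : Ω₂ e → GTree E Ω₁ Ω₂) : GTree E Ω₁ Ω₂

variable {E : Type*} [Fintype E] [DecidableEq E] {Ω₁ : E → Type*} {Ω₂ : E → Type*}
  [∀ e, Fintype (Ω₁ e)] [∀ e, Fintype (Ω₂ e)]

/-- Along each root-to-leaf path, every edge of `rem` is queried exactly once. -/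
def GTree.complete : GTree E Ω₁ Ω₂ → Finset E → Prop
  | .leaf, rem => rem = ∅
  | .node1 e child, rem => e ∈ rem ∧ ∀ x, (child x).complete (rem.erase e)
  | .node2 e child, rem => e ∈ rem ∧ ∀ x, (child x).complete (rem.erase e)

/-- The probability that the run of the tree outputs exactly the configuration `C`,
when values at `node1`/`node2` nodes are sampled independently with mass functions
`m₁`/`m₂`. -/
def GTree.mass (m₁ : ∀ e, Ω₁ e → ℝ) (m₂ : ∀ e, Ω₂ e → ℝ) :
    GTree E Ω₁ Ω₂ → (∀ e, Ω₁ e ⊕ Ω₂ e) → ℝ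
  | .leaf, _ => 1
  | .node1 e child, C =>
      match C e with
      | .inl x => m₁ e x * (child x).mass m₁ m₂ C
      | .inr _ => 0
  | .node2 e child, C =>
      match C e with
      | .inl _ => 0
      | .inr x => m₂ e x * (child x).mass m₁ m₂ C

/-- Mass function of `C₁`, the configuration sampled entirely from the first spaces. -/
def mass1 (m₁ : ∀ e, Ω₁ e → ℝ) (C : ∀ e, Ω₁ e ⊕ Ω₂ e) : ℝ :=
  ∏ e, match C e with
       | .inl x => m₁ e x
       | .inr _ => 0

/-- Mass function of `C₂`, the configuration sampled entirely from the second spaces. -/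
def mass2 (m₂ : ∀ e, Ω₂ e → ℝ) (C : ∀ e, Ω₁ e ⊕ Ω₂ e) : ℝ :=
  ∏ e, match C e with
       | .inl _ => 0
       | .inr x => m₂ e x

/-- Probability of an event under a mass function on a finite configuration space. -/
noncomputable def PrOf {Ω : Type*} [Fintype Ω] (mass : Ω → ℝ) (A : Set Ω) : ℝ :=
  ∑ x : Ω, A.indicator mass x

/-- An event of configurations in `{0,1}^E` is closed upward if it is preserved by
turning more coordinates to `true`. -/
def UpwardClosed (A : Set (E → Bool)) : Prop :=
  ∀ C₁ C₂ : E → Bool, C₁ ∈ A → (∀ e, C₁ e = true → C₂ e = true) → C₂ ∈ A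

section ProdMass

variable {E : Type*} {α : E → Type*} {rem : Finset E} {e : E}

def prodMass (w : ∀ e, α e → ℝ) (rem : Finset E) (C : ∀ e, α e) : ℝ :=
  ∏ e ∈ rem, w e (C e)

lemma prodMass_empty (w : ∀ e, α e → ℝ) : prodMass w ∅ = fun _ => 1 :=
  funext fun _ => Finset.prod_empty

lemma prodMass_nonneg {w : ∀ e, α e → ℝ} (hw : ∀ e v, 0 ≤ w e v) (C : ∀ e, α e) :
    0 ≤ prodMass w rem C :=
  Finset.prod_nonneg fun e _ => hw e (C e)

lemma prodMass_update_of_notMem [DecidableEq E] (w : ∀ e, α e → ℝ) (he : e ∉ rem)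
    (C : ∀ e, α e) (v : α e) :
    prodMass w rem (Function.update C e v) = prodMass w rem C :=
  Finset.prod_congr rfl fun _ he' => by rw [Function.update_of_ne (ne_of_mem_of_not_mem he' he)]

end ProdMass

section Configurations

variable {E : Type*} [Fintype E] [DecidableEq E] {α : E → Type*} [∀ e, Fintype (α e)]

def agreeOutside (rem : Finset E) (C₀ : ∀ e, α e) : Finset (∀ e, α e) :=
  Fintype.piFinset fun e => if e ∈ rem then Finset.univ else {C₀ e}

lemma mem_agreeOutside {rem : Finset E} {C₀ C : ∀ e, α e} :
    C ∈ agreeOutside rem C₀ ↔ ∀ e ∉ rem, C e = C₀ e := by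
  simp only [agreeOutside, Fintype.mem_piFinset]
  refine forall_congr' fun e => ?_
  split_ifs with he <;> simp [he]

lemma agreeOutside_empty (C₀ : ∀ e, α e) : agreeOutside ∅ C₀ = {C₀} := by
  ext C
  simp [mem_agreeOutside, funext_iff]

lemma agreeOutside_univ (C₀ : ∀ e, α e) : agreeOutside Finset.univ C₀ = Finset.univ := by
  ext C
  simp [mem_agreeOutside]

variable {M : Type*} [AddCommMonoid M]

lemma sum_agreeOutside_of_mem {rem : Finset E} {e : E} (he : e ∈ rem) (C₀ : ∀ e, α e)
    (g : (∀ e, α e) → M) :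
    ∑ C ∈ agreeOutside rem C₀, g C =
      ∑ v : α e, ∑ C ∈ agreeOutside (rem.erase e) (Function.update C₀ e v), g C := by
  rw [Finset.sum_comm' (t' := agreeOutside rem C₀) (s' := fun C => {C e})]
  · simp
  · intro v C
    simp only [Finset.mem_univ, true_and, mem_agreeOutside, Finset.mem_singleton,
      Finset.mem_erase, not_and']
    constructor
    · intro h
      have hv : C e = v := by simpa using h e (by simp)
      refine ⟨hv.symm, fun e' he' => ?_⟩
      have hne : e' ≠ e := by rintro rfl; exact he' he
      simpa [hne] using h e' (by simp [he'])
    · rintro ⟨rfl, h⟩ e' he'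
      by_cases hne : e' = e
      · subst hne; simp
      · simpa [hne] using h e' (by simpa [hne] using he')

lemma sum_agreeOutside_update_of_notMem {rem : Finset E} {e : E} (he : e ∉ rem)
    (C₀ : ∀ e, α e) (v : α e) (g : (∀ e, α e) → M) :
    ∑ C ∈ agreeOutside rem (Function.update C₀ e v), g C =
      ∑ C ∈ agreeOutside rem C₀, g (Function.update C e v) := by
  symm
  refine Finset.sum_nbij' (Function.update · e v) (Function.update · e (C₀ e)) ?_ ?_ ?_ ?_ ?_
  · intro C hC
    simp only [mem_agreeOutside] at hC ⊢
    intro e' he'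
    by_cases hne : e' = e
    · subst hne; simp
    · simp [hne, hC e' he']
  · intro C hC
    simp only [mem_agreeOutside] at hC ⊢
    intro e' he'
    by_cases hne : e' = e
    · subst hne; simp
    · simpa [hne] using hC e' he'
  · intro C hC
    simp only [mem_agreeOutside] at hC
    simp [← hC e he]
  · intro C hC
    simp only [mem_agreeOutside] at hC
    have hv : C e = v := by simpa using hC e he
    simp [← hv]
  · intro C _
    rfl

noncomputable def partialPr (A : Set (∀ e, α e)) (μ : (∀ e, α e) → ℝ) (rem : Finset E)
    (C₀ : ∀ e, α e) : ℝ :=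
  ∑ C ∈ agreeOutside rem C₀, A.indicator μ C

variable {A : Set (∀ e, α e)} {μ : (∀ e, α e) → ℝ} {rem : Finset E} {e : E}

lemma partialPr_empty (C₀ : ∀ e, α e) : partialPr A μ ∅ C₀ = A.indicator μ C₀ := by
  simp [partialPr, agreeOutside_empty]

lemma partialPr_univ (C₀ : ∀ e, α e) : partialPr A μ Finset.univ C₀ = PrOf μ A := by
  simp [partialPr, agreeOutside_univ, PrOf]

lemma partialPr_const_mul (c : ℝ) (C₀ : ∀ e, α e) :
    partialPr A (fun C => c * μ C) rem C₀ = c * partialPr A μ rem C₀ := by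
  simp only [partialPr, Finset.mul_sum, Set.indicator_const_mul]

lemma partialPr_zero (C₀ : ∀ e, α e) : partialPr A (fun _ => 0) rem C₀ = 0 := by
  simp [partialPr]

lemma partialPr_of_mem (he : e ∈ rem) (ν : α e → (∀ e, α e) → ℝ) (hμ : ∀ C, μ C = ν (C e) C)
    (C₀ : ∀ e, α e) :
    partialPr A μ rem C₀ =
      ∑ v : α e, partialPr A (ν v) (rem.erase e) (Function.update C₀ e v) := by
  rw [partialPr, sum_agreeOutside_of_mem he]
  refine Finset.sum_congr rfl fun v _ => Finset.sum_congr rfl fun C hC => ?_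
  have hv : C e = v := by simpa using mem_agreeOutside.1 hC e (by simp)
  simp only [Set.indicator, hμ C, hv]

lemma partialPr_prodMass (w : ∀ e, α e → ℝ) (he : e ∈ rem) (C₀ : ∀ e, α e) :
    partialPr A (prodMass w rem) rem C₀ =
      ∑ v : α e, w e v *
        partialPr A (prodMass w (rem.erase e)) (rem.erase e) (Function.update C₀ e v) := by
  rw [partialPr_of_mem he fun v C => w e v * prodMass w (rem.erase e) C]
  · simp only [partialPr_const_mul]
  · intro C
    exact (Finset.mul_prod_erase rem _ he).symm

lemma sum_mul_partialPr_update {ι : Type*} [Fintype ι] {ν : (∀ e, α e) → ℝ} (he : e ∉ rem)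
    (hν : ∀ C v, ν (Function.update C e v) = ν C) (c : ι → ℝ) (f : ι → α e) (C₀ : ∀ e, α e) :
    ∑ i, c i * partialPr A ν rem (Function.update C₀ e (f i)) =
      ∑ D ∈ agreeOutside rem C₀,
        ν D * ∑ i, A.indicator (fun _ => c i) (Function.update D e (f i)) := by
  simp_rw [partialPr, sum_agreeOutside_update_of_notMem he, Finset.mul_sum]
  rw [Finset.sum_comm]
  refine Finset.sum_congr rfl fun D _ => Finset.sum_congr rfl fun i _ => ?_
  simp only [Set.indicator, hν]
  split_ifs <;> ring

lemma sum_mul_partialPr_update_le {ι κ : Type*} [Fintype ι] [Fintype κ] {ν : (∀ e, α e) → ℝ}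
    (he : e ∉ rem) (hν : ∀ C v, ν (Function.update C e v) = ν C) (hν0 : ∀ C, 0 ≤ ν C)
    (c : ι → ℝ) (f : ι → α e) (d : κ → ℝ) (g : κ → α e)
    (hA : ∀ D, ∑ i, A.indicator (fun _ => c i) (Function.update D e (f i)) ≤
      ∑ j, A.indicator (fun _ => d j) (Function.update D e (g j)))
    (C₀ : ∀ e, α e) :
    ∑ i, c i * partialPr A ν rem (Function.update C₀ e (f i)) ≤
      ∑ j, d j * partialPr A ν rem (Function.update C₀ e (g j)) := by
  rw [sum_mul_partialPr_update he hν, sum_mul_partialPr_update he hν]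
  exact Finset.sum_le_sum fun D _ => mul_le_mul_of_nonneg_left (hA D) (hν0 D)

end Configurations

section Trees

variable (m₁ : ∀ e, Ω₁ e → ℝ) (m₂ : ∀ e, Ω₂ e → ℝ)

def inlWeight : ∀ e, Ω₁ e ⊕ Ω₂ e → ℝ := fun e => Sum.elim (m₁ e) 0

def inrWeight : ∀ e, Ω₁ e ⊕ Ω₂ e → ℝ := fun e => Sum.elim 0 (m₂ e)

def ResampleIncreases (A : Set (∀ e, Ω₁ e ⊕ Ω₂ e)) : Prop :=
  ∀ (e : E) (C : ∀ e', Ω₁ e' ⊕ Ω₂ e'),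
    ∑ x : Ω₁ e, A.indicator (fun _ => m₁ e x) (Function.update C e (Sum.inl x)) ≤
      ∑ y : Ω₂ e, A.indicator (fun _ => m₂ e y) (Function.update C e (Sum.inr y))

omit [DecidableEq E] [∀ e, Fintype (Ω₁ e)] [∀ e, Fintype (Ω₂ e)] in
lemma mass1_eq_prodMass : mass1 (Ω₂ := Ω₂) m₁ = prodMass (inlWeight m₁) Finset.univ :=
  funext fun C => Finset.prod_congr rfl fun e _ => by cases C e <;> rfl

omit [DecidableEq E] [∀ e, Fintype (Ω₁ e)] [∀ e, Fintype (Ω₂ e)] in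
lemma mass2_eq_prodMass : mass2 (Ω₁ := Ω₁) m₂ = prodMass (inrWeight m₂) Finset.univ :=
  funext fun C => Finset.prod_congr rfl fun e _ => by cases C e <;> rfl

variable {m₁ m₂}

omit [Fintype E] [DecidableEq E] [∀ e, Fintype (Ω₁ e)] [∀ e, Fintype (Ω₂ e)] in
lemma inlWeight_nonneg (hm₁0 : ∀ e x, 0 ≤ m₁ e x) (e : E) (v : Ω₁ e ⊕ Ω₂ e) :
    0 ≤ inlWeight m₁ e v := by
  cases v <;> simp [inlWeight, hm₁0]

omit [Fintype E] [DecidableEq E] [∀ e, Fintype (Ω₁ e)] [∀ e, Fintype (Ω₂ e)] in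
lemma inrWeight_nonneg (hm₂0 : ∀ e y, 0 ≤ m₂ e y) (e : E) (v : Ω₁ e ⊕ Ω₂ e) :
    0 ≤ inrWeight m₂ e v := by
  cases v <;> simp [inrWeight, hm₂0]

variable {A : Set (∀ e, Ω₁ e ⊕ Ω₂ e)} {rem : Finset E} {e : E}

lemma partialPr_prodMass_inlWeight (he : e ∈ rem) (C₀ : ∀ e, Ω₁ e ⊕ Ω₂ e) :
    partialPr A (prodMass (inlWeight m₁) rem) rem C₀ =
      ∑ x : Ω₁ e, m₁ e x * partialPr A (prodMass (inlWeight m₁) (rem.erase e)) (rem.erase e)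
        (Function.update C₀ e (.inl x)) := by
  simp [partialPr_prodMass _ he, Fintype.sum_sum_type, inlWeight]

lemma partialPr_prodMass_inrWeight (he : e ∈ rem) (C₀ : ∀ e, Ω₁ e ⊕ Ω₂ e) :
    partialPr A (prodMass (inrWeight m₂) rem) rem C₀ =
      ∑ y : Ω₂ e, m₂ e y * partialPr A (prodMass (inrWeight m₂) (rem.erase e)) (rem.erase e)
        (Function.update C₀ e (.inr y)) := by
  simp [partialPr_prodMass _ he, Fintype.sum_sum_type, inrWeight]

lemma GTree.partialPr_mass_node1 (he : e ∈ rem) (child : Ω₁ e → GTree E Ω₁ Ω₂)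
    (C₀ : ∀ e, Ω₁ e ⊕ Ω₂ e) :
    partialPr A ((GTree.node1 e child).mass m₁ m₂) rem C₀ =
      ∑ x : Ω₁ e, m₁ e x * partialPr A ((child x).mass m₁ m₂) (rem.erase e)
        (Function.update C₀ e (.inl x)) := by
  rw [partialPr_of_mem he (Sum.elim (fun x C => m₁ e x * (child x).mass m₁ m₂ C) fun _ _ => 0)]
  · simp [Fintype.sum_sum_type, partialPr_const_mul, partialPr_zero]
  · intro C
    cases h : C e <;> simp [GTree.mass, h]

lemma GTree.partialPr_mass_node2 (he : e ∈ rem) (child : Ω₂ e → GTree E Ω₁ Ω₂)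
    (C₀ : ∀ e, Ω₁ e ⊕ Ω₂ e) :
    partialPr A ((GTree.node2 e child).mass m₁ m₂) rem C₀ =
      ∑ y : Ω₂ e, m₂ e y * partialPr A ((child y).mass m₁ m₂) (rem.erase e)
        (Function.update C₀ e (.inr y)) := by
  rw [partialPr_of_mem he (Sum.elim (fun _ _ => 0) fun y C => m₂ e y * (child y).mass m₁ m₂ C)]
  · simp [Fintype.sum_sum_type, partialPr_const_mul, partialPr_zero]
  · intro C
    cases h : C e <;> simp [GTree.mass, h]

lemma sum_partialPr_prodMass_inl_le_inr
    (hcond : ResampleIncreases m₁ m₂ A)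
    {w : ∀ e, Ω₁ e ⊕ Ω₂ e → ℝ} (hw : ∀ e v, 0 ≤ w e v) (he : e ∉ rem) (C₀ : ∀ e, Ω₁ e ⊕ Ω₂ e) :
    ∑ x : Ω₁ e, m₁ e x * partialPr A (prodMass w rem) rem (Function.update C₀ e (.inl x)) ≤
      ∑ y : Ω₂ e, m₂ e y * partialPr A (prodMass w rem) rem (Function.update C₀ e (.inr y)) :=
  sum_mul_partialPr_update_le he (prodMass_update_of_notMem w he) (prodMass_nonneg hw)
    (m₁ e) .inl (m₂ e) .inr (hcond e) C₀

theorem GTree.partialPr_mass_bounds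
    (hm₁0 : ∀ e x, 0 ≤ m₁ e x) (hm₂0 : ∀ e x, 0 ≤ m₂ e x)
    (hcond : ResampleIncreases m₁ m₂ A)
    (T : GTree E Ω₁ Ω₂) (hT : T.complete rem) (C₀ : ∀ e, Ω₁ e ⊕ Ω₂ e) :
    partialPr A (prodMass (inlWeight m₁) rem) rem C₀ ≤ partialPr A (T.mass m₁ m₂) rem C₀ ∧
      partialPr A (T.mass m₁ m₂) rem C₀ ≤ partialPr A (prodMass (inrWeight m₂) rem) rem C₀ := by
  induction T generalizing rem C₀ with
  | leaf =>
    obtain rfl : rem = ∅ := hT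
    simp [partialPr_empty, prodMass_empty, GTree.mass]
  | node1 e child ih =>
    obtain ⟨he, hchild⟩ := hT
    rw [partialPr_prodMass_inlWeight he, partialPr_prodMass_inrWeight he,
      GTree.partialPr_mass_node1 he]
    refine ⟨Finset.sum_le_sum fun x _ =>
      mul_le_mul_of_nonneg_left (ih x (hchild x) _).1 (hm₁0 e x), ?_⟩
    calc _ ≤ ∑ x : Ω₁ e, m₁ e x * partialPr A (prodMass (inrWeight m₂) (rem.erase e))
            (rem.erase e) (Function.update C₀ e (.inl x)) :=
          Finset.sum_le_sum fun x _ => mul_le_mul_of_nonneg_left (ih x (hchild x) _).2 (hm₁0 e x)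
      _ ≤ _ := sum_partialPr_prodMass_inl_le_inr hcond (inrWeight_nonneg hm₂0)
          (Finset.notMem_erase e rem) C₀
  | node2 e child ih =>
    obtain ⟨he, hchild⟩ := hT
    rw [partialPr_prodMass_inlWeight he, partialPr_prodMass_inrWeight he,
      GTree.partialPr_mass_node2 he]
    refine ⟨?_, Finset.sum_le_sum fun y _ =>
      mul_le_mul_of_nonneg_left (ih y (hchild y) _).2 (hm₂0 e y)⟩
    calc _ ≤ ∑ y : Ω₂ e, m₂ e y * partialPr A (prodMass (inlWeight m₁) (rem.erase e))
            (rem.erase e) (Function.update C₀ e (.inr y)) :=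
          sum_partialPr_prodMass_inl_le_inr hcond (inlWeight_nonneg hm₁0)
            (Finset.notMem_erase e rem) C₀
      _ ≤ _ :=
          Finset.sum_le_sum fun y _ => mul_le_mul_of_nonneg_left (ih y (hchild y) _).1 (hm₂0 e y)

end Trees

theorem main_lemma_general
    (m₁ : ∀ e, Ω₁ e → ℝ) (m₂ : ∀ e, Ω₂ e → ℝ)
    (hm₁0 : ∀ e x, 0 ≤ m₁ e x) (hm₂0 : ∀ e x, 0 ≤ m₂ e x)
    (A : Set (∀ e, Ω₁ e ⊕ Ω₂ e))
    (hcond : ∀ (e : E) (C : ∀ e', Ω₁ e' ⊕ Ω₂ e'),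
      (∑ x : Ω₁ e, A.indicator (fun _ => m₁ e x) (Function.update C e (Sum.inl x)))
        ≤ ∑ x : Ω₂ e, A.indicator (fun _ => m₂ e x) (Function.update C e (Sum.inr x)))
    (T : GTree E Ω₁ Ω₂) (hT : T.complete Finset.univ) :
    PrOf (mass1 m₁) A ≤ PrOf (T.mass m₁ m₂) A ∧
      PrOf (T.mass m₁ m₂) A ≤ PrOf (mass2 m₂) A := by
  rcases isEmpty_or_nonempty (∀ e, Ω₁ e ⊕ Ω₂ e) with _ | ⟨⟨C₀⟩⟩
  · simp [PrOf]
  · rw [mass1_eq_prodMass, mass2_eq_prodMass, ← partialPr_univ C₀, ← partialPr_univ C₀,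
      ← partialPr_univ C₀]
    exact GTree.partialPr_mass_bounds hm₁0 hm₂0 hcond T hT C₀

/-- Main Lemma for generating decision trees: if for every edge `e` and every
configuration `C` the measure of `X₁(C,e) = {x ∈ Ω₁(e) : C⟨e:=x⟩ ∈ A}` under `μ₁(e)`
is at most the measure of `X₂(C,e)` under `μ₂(e)`, then
`P(C₁ ∈ A) ≤ P(C ∈ A) ≤ P(C₂ ∈ A)`. -/
theorem main_lemma
    (m₁ : ∀ e, Ω₁ e → ℝ) (m₂ : ∀ e, Ω₂ e → ℝ)
    (hm₁0 : ∀ e x, 0 ≤ m₁ e x) (hm₂0 : ∀ e x, 0 ≤ m₂ e x)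
    (hm₁1 : ∀ e, ∑ x : Ω₁ e, m₁ e x = 1) (hm₂1 : ∀ e, ∑ x : Ω₂ e, m₂ e x = 1)
    (A : Set (∀ e, Ω₁ e ⊕ Ω₂ e))
    (hcond : ∀ (e : E) (C : ∀ e', Ω₁ e' ⊕ Ω₂ e'),
      (∑ x : Ω₁ e, A.indicator (fun _ => m₁ e x) (Function.update C e (Sum.inl x)))
        ≤ ∑ x : Ω₂ e, A.indicator (fun _ => m₂ e x) (Function.update C e (Sum.inr x)))
    (T : GTree E Ω₁ Ω₂) (hT : T.complete Finset.univ) :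
    PrOf (mass1 m₁) A ≤ PrOf (T.mass m₁ m₂) A ∧
      PrOf (T.mass m₁ m₂) A ≤ PrOf (mass2 m₂) A :=
  main_lemma_general m₁ m₂ hm₁0 hm₂0 A hcond T hT

end GenDT
end

section
/- (Pairwise part of the decision tree colored-percolation theorem.) Let E be a finite set. In the generalized decision-tree model, take Ω₁(e)={(x,y,z)∈{0,1}³ : x⊕y⊕z=0}={000,011,101,110} with μ₁(e) uniform (probability 1/4 each), and Ω₂(e)={0,1}³ with μ₂(e) uniform (probability 1/8 each). For events U,V ⊆ {0,1}^E that are closed upward, let U×V denote the event that the configuration of first coordinates (e ↦ first bit of C(e)) lies in U and the configuration of second coordinates lies in V. Then for every generating decision tree T with random output configuration C, P(C₁∈U×V) = P(C∈U×V) = P(C₂∈U×V), where C₁ has distribution Π_e μ₁(e) and C₂ has distribution Π_e μ₂(e). -/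
/-! Under both `μ₁(e)` and `μ₂(e)` the first two bits of the triple at `e` are two independent
fair bits, and the event `U × V` only sees these pairs of bits. So whichever space a node of
the tree samples from, the pair at the queried edge is fresh and uniform. By induction on the
tree, querying an edge can be traded for resampling it from a fixed product weight `w`, which
leaves that product measure invariant. Taking for `w` the law of `C₁`, resp. `C₂`, gives both
equalities. -/

namespace GenDT

variable {E : Type*} [Fintype E] [DecidableEq E] {Ω₁ : E → Type*} {Ω₂ : E → Type*}
  [∀ e, Fintype (Ω₁ e)] [∀ e, Fintype (Ω₂ e)]

/-- Triples of bits. -/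
abbrev B3 : Type := Bool × Bool × Bool

/-- Triples of bits with xor equal to `0`: `{000, 011, 101, 110}`. -/
abbrev XorZero : Type := {x : B3 // xor x.1 (xor x.2.1 x.2.2) = false}

/-- The triple of bits carried by a value of `Ω₁(e) ⊔ Ω₂(e)`. -/
def bits : XorZero ⊕ B3 → B3
  | .inl x => x.1
  | .inr x => x

/-- `μ₁(e)`: uniform on the four xor-zero triples. -/
noncomputable def massXor : (e : E) → XorZero → ℝ := fun _ _ => 1 / 4

/-- `μ₂(e)`: uniform on all eight triples. -/
noncomputable def massAll : (e : E) → B3 → ℝ := fun _ _ => 1 / 8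

/-- The event `U × V`: the configuration of first coordinates lies in `U` and the
configuration of second coordinates lies in `V`. -/
def CoordEvent₂ (U V : Set (E → Bool)) : Set (E → XorZero ⊕ B3) :=
  {C | (fun e => (bits (C e)).1) ∈ U ∧ (fun e => (bits (C e)).2.1) ∈ V}

open Finset Function

section Pi
variable {ι : Type*} [Fintype ι] [DecidableEq ι] {β : ι → Type*} [∀ i, Fintype (β i)]

theorem sum_pi_eq_sum_sum_mul_update (i : ι) {w : β i → ℝ} (hw : ∑ b, w b = 1)
    (F : (∀ j, β j) → ℝ) :
    ∑ x, F x = ∑ b, ∑ x, w (x i) * F (update x i b) := by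
  let σ := (Equiv.piSplitAt i β).symm
  have hσ : ∀ a b y, update (σ (a, y)) i b = σ (b, y) := fun a b y => by
    rw [Equiv.eq_symm_apply]
    ext j
    · simp
    · simp [σ, update_of_ne j.2, dif_neg j.2]
  have hsplit (G : (∀ j, β j) → ℝ) : ∑ x, G x = ∑ a, ∑ y, G (σ (a, y)) := by
    rw [← σ.sum_comp, Fintype.sum_prod_type]
  simp only [hsplit F, hsplit (fun x => w (x i) * F (update x i _)), hσ]
  refine sum_congr rfl fun b _ => ?_
  simp [σ, ← mul_sum, ← sum_mul, hw]

theorem sum_prod_mul_sum_mul_update {w : ∀ i, β i → ℝ} (i : ι) (hw : ∑ b, w i b = 1)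
    (H : (∀ j, β j) → ℝ) :
    ∑ x, (∏ j, w j (x j)) * ∑ b, w i b * H (update x i b)
      = ∑ x, (∏ j, w j (x j)) * H x := by
  have hprod (x : ∀ j, β j) (b : β i) :
      ∏ j, w j (update x i b j) = w i b * ∏ j ∈ univ.erase i, w j (x j) := by
    rw [← mul_prod_erase univ _ (mem_univ i), update_self]
    congr 1
    exact prod_congr rfl fun j hj => by rw [update_of_ne (ne_of_mem_erase hj)]
  rw [sum_pi_eq_sum_sum_mul_update i hw (fun x => (∏ j, w j (x j)) * H x), sum_comm]
  simp only [hprod, mul_sum]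
  refine sum_congr rfl fun x _ => sum_congr rfl fun b _ => ?_
  rw [← mul_prod_erase univ _ (mem_univ i)]
  ring

end Pi

omit [Fintype E] [∀ e, Fintype (Ω₁ e)] [∀ e, Fintype (Ω₂ e)] in
theorem GTree.mass_update_of_notMem {m₁ : ∀ e, Ω₁ e → ℝ} {m₂ : ∀ e, Ω₂ e → ℝ}
    {T : GTree E Ω₁ Ω₂} {s : Finset E} (hT : T.complete s) {e : E} (he : e ∉ s)
    (C : ∀ j, Ω₁ j ⊕ Ω₂ j) (c : Ω₁ e ⊕ Ω₂ e) :
    T.mass m₁ m₂ (update C e c) = T.mass m₁ m₂ C := by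
  induction T generalizing s with
  | leaf => rfl
  | node1 e' ch ih | node2 e' ch ih =>
    obtain ⟨he', hch⟩ := hT
    have hne : e' ≠ e := ne_of_mem_of_not_mem he' he
    simp only [GTree.mass, update_of_ne hne]
    split <;> simp only [ih _ (hch _) (fun h => he (mem_of_mem_erase h))]

omit [DecidableEq E] [∀ e, Fintype (Ω₁ e)] [∀ e, Fintype (Ω₂ e)] in
theorem mass1_eq_prod (m₁ : ∀ e, Ω₁ e → ℝ) (C : ∀ e, Ω₁ e ⊕ Ω₂ e) :
    mass1 m₁ C = ∏ e, Sum.elim (m₁ e) 0 (C e) :=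
  prod_congr rfl fun e _ => by cases C e <;> rfl

omit [DecidableEq E] [∀ e, Fintype (Ω₁ e)] [∀ e, Fintype (Ω₂ e)] in
theorem mass2_eq_prod (m₂ : ∀ e, Ω₂ e → ℝ) (C : ∀ e, Ω₁ e ⊕ Ω₂ e) :
    mass2 m₂ C = ∏ e, Sum.elim 0 (m₂ e) (C e) :=
  prod_congr rfl fun e _ => by cases C e <;> rfl

section
variable {m₁ : ∀ e, Ω₁ e → ℝ} {m₂ : ∀ e, Ω₂ e → ℝ} {α : E → Type*}
  (π : ∀ e, Ω₁ e ⊕ Ω₂ e → α e) {w : ∀ e, Ω₁ e ⊕ Ω₂ e → ℝ}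

theorem GTree.sum_mass_mul_prod_compl_node {e : E} (hw : ∑ c, w e c = 1) {γ : Type*} [Fintype γ]
    (ι : γ → Ω₁ e ⊕ Ω₂ e) (m : γ → ℝ)
    (hm : ∀ G : α e → ℝ, ∑ x, m x * G (π e (ι x)) = ∑ c, w e c * G (π e c))
    (ch : γ → GTree E Ω₁ Ω₂) {s : Finset E} (he : e ∈ s)
    (hch : ∀ x, (ch x).complete (s.erase e))
    (ih : ∀ x (g : (∀ e, α e) → ℝ),
      ∑ C : ∀ j, Ω₁ j ⊕ Ω₂ j,
          (ch x).mass m₁ m₂ C * (∏ j ∈ (s.erase e)ᶜ, w j (C j)) * g (fun j => π j (C j))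
        = ∑ C : ∀ j, Ω₁ j ⊕ Ω₂ j, (∏ j, w j (C j)) * g (fun j => π j (C j)))
    (g : (∀ e, α e) → ℝ) :
    ∑ x, ∑ C : ∀ j, Ω₁ j ⊕ Ω₂ j, w e (C e) * (m x * (ch x).mass m₁ m₂ (update C e (ι x))
        * (∏ j ∈ sᶜ, w j (update C e (ι x) j)) * g (fun j => π j (update C e (ι x) j)))
      = ∑ C : ∀ j, Ω₁ j ⊕ Ω₂ j, (∏ j, w j (C j)) * g (fun j => π j (C j)) := by
  have hW (C : ∀ j, Ω₁ j ⊕ Ω₂ j) (c : Ω₁ e ⊕ Ω₂ e) :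
      w e (C e) * ∏ j ∈ sᶜ, w j (update C e c j) = ∏ j ∈ (s.erase e)ᶜ, w j (C j) := by
    rw [compl_erase, prod_insert (notMem_compl.2 he)]
    congr 1
    refine prod_congr rfl fun j hj => ?_
    rw [update_of_ne (ne_of_mem_of_not_mem he (mem_compl.1 hj)).symm]
  have hπ (C : ∀ j, Ω₁ j ⊕ Ω₂ j) (c : Ω₁ e ⊕ Ω₂ e) :
      (fun j => π j (update C e c j)) = update (fun j => π j (C j)) e (π e c) :=
    funext fun j => apply_update π C e c j
  calc _ = ∑ x, m x * ∑ C : ∀ j, Ω₁ j ⊕ Ω₂ j, (ch x).mass m₁ m₂ C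
          * (∏ j ∈ (s.erase e)ᶜ, w j (C j))
          * g (update (fun j => π j (C j)) e (π e (ι x))) := by
        refine sum_congr rfl fun x _ => ?_
        rw [mul_sum]
        refine sum_congr rfl fun C _ => ?_
        rw [GTree.mass_update_of_notMem (hch x) (notMem_erase e s), hπ, ← hW C (ι x)]
        ring
    _ = ∑ x, m x * ∑ C : ∀ j, Ω₁ j ⊕ Ω₂ j, (∏ j, w j (C j))
          * g (update (fun j => π j (C j)) e (π e (ι x))) :=
        sum_congr rfl fun x _ =>
          congrArg (m x * ·) (ih x fun q => g (update q e (π e (ι x))))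
    _ = ∑ C : ∀ j, Ω₁ j ⊕ Ω₂ j, (∏ j, w j (C j))
          * ∑ x, m x * g (update (fun j => π j (C j)) e (π e (ι x))) := by
        simp only [mul_sum]
        rw [sum_comm]
        exact sum_congr rfl fun _ _ => sum_congr rfl fun _ _ => by ring
    _ = ∑ C : ∀ j, Ω₁ j ⊕ Ω₂ j, (∏ j, w j (C j))
          * ∑ c, w e c * g (update (fun j => π j (C j)) e (π e c)) :=
        sum_congr rfl fun C _ => congrArg _ (hm fun a => g (update (fun j => π j (C j)) e a))
    _ = _ := by
        simp_rw [← hπ]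
        exact sum_prod_mul_sum_mul_update e hw fun C => g fun j => π j (C j)

/-- `T` leaves the edges outside `s` unsampled; they are weighted by `w` instead. -/
theorem GTree.sum_mass_mul_prod_compl (hw : ∀ e, ∑ c, w e c = 1)
    (h₁ : ∀ e (G : α e → ℝ), ∑ x, m₁ e x * G (π e (.inl x)) = ∑ c, w e c * G (π e c))
    (h₂ : ∀ e (G : α e → ℝ), ∑ y, m₂ e y * G (π e (.inr y)) = ∑ c, w e c * G (π e c))
    {T : GTree E Ω₁ Ω₂} {s : Finset E} (hT : T.complete s) (g : (∀ e, α e) → ℝ) :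
    ∑ C : ∀ j, Ω₁ j ⊕ Ω₂ j, T.mass m₁ m₂ C * (∏ j ∈ sᶜ, w j (C j)) * g (fun j => π j (C j))
      = ∑ C : ∀ j, Ω₁ j ⊕ Ω₂ j, (∏ j, w j (C j)) * g (fun j => π j (C j)) := by
  induction T generalizing s g with
  | leaf =>
    rw [show s = ∅ from hT]
    simp [GTree.mass]
  | node1 e ch ih =>
    rw [sum_pi_eq_sum_sum_mul_update e (hw e), Fintype.sum_sum_type]
    simp only [GTree.mass, update_self, mul_zero, zero_mul, sum_const_zero, add_zero]
    exact GTree.sum_mass_mul_prod_compl_node π (hw e) Sum.inl (m₁ e) (h₁ e) ch hT.1 hT.2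
      (fun x => ih x (hT.2 x)) g
  | node2 e ch ih =>
    rw [sum_pi_eq_sum_sum_mul_update e (hw e), Fintype.sum_sum_type]
    simp only [GTree.mass, update_self, mul_zero, zero_mul, sum_const_zero, zero_add]
    exact GTree.sum_mass_mul_prod_compl_node π (hw e) Sum.inr (m₂ e) (h₂ e) ch hT.1 hT.2
      (fun x => ih x (hT.2 x)) g

theorem GTree.sum_mass_mul_eq_mass1
    (hπ : ∀ e (G : α e → ℝ), ∑ x, m₁ e x * G (π e (.inl x)) = ∑ y, m₂ e y * G (π e (.inr y)))
    (h₁ : ∀ e, ∑ x, m₁ e x = 1) {T : GTree E Ω₁ Ω₂} (hT : T.complete univ)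
    (g : (∀ e, α e) → ℝ) :
    ∑ C : ∀ j, Ω₁ j ⊕ Ω₂ j, T.mass m₁ m₂ C * g (fun j => π j (C j))
      = ∑ C : ∀ j, Ω₁ j ⊕ Ω₂ j, mass1 m₁ C * g (fun j => π j (C j)) := by
  have hw (e) (G : Ω₁ e ⊕ Ω₂ e → ℝ) :
      ∑ c, Sum.elim (m₁ e) 0 c * G c = ∑ x, m₁ e x * G (.inl x) := by
    simp [Fintype.sum_sum_type]
  simpa [mass1_eq_prod] using T.sum_mass_mul_prod_compl π (w := fun e => Sum.elim (m₁ e) 0)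
    (fun e => by simp [Fintype.sum_sum_type, h₁]) (fun e G => (hw e fun c => G (π e c)).symm)
    (fun e G => (hπ e G).symm.trans (hw e fun c => G (π e c)).symm) hT g

theorem GTree.sum_mass_mul_eq_mass2
    (hπ : ∀ e (G : α e → ℝ), ∑ x, m₁ e x * G (π e (.inl x)) = ∑ y, m₂ e y * G (π e (.inr y)))
    (h₁ : ∀ e, ∑ x, m₁ e x = 1) {T : GTree E Ω₁ Ω₂} (hT : T.complete univ)
    (g : (∀ e, α e) → ℝ) :
    ∑ C : ∀ j, Ω₁ j ⊕ Ω₂ j, T.mass m₁ m₂ C * g (fun j => π j (C j))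
      = ∑ C : ∀ j, Ω₁ j ⊕ Ω₂ j, mass2 m₂ C * g (fun j => π j (C j)) := by
  have hw (e) (G : Ω₁ e ⊕ Ω₂ e → ℝ) :
      ∑ c, Sum.elim (0 : Ω₁ e → ℝ) (m₂ e) c * G c = ∑ y, m₂ e y * G (.inr y) := by
    simp [Fintype.sum_sum_type]
  simpa [mass2_eq_prod] using T.sum_mass_mul_prod_compl π (w := fun e => Sum.elim 0 (m₂ e))
    (fun e => by simpa [h₁] using (hw e fun _ => 1).trans (hπ e fun _ => 1).symm)
    (fun e G => (hπ e G).trans (hw e fun c => G (π e c)).symm)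
    (fun e G => (hw e fun c => G (π e c)).symm) hT g

end

def firstTwoBits (c : XorZero ⊕ B3) : Bool × Bool := ((bits c).1, (bits c).2.1)

theorem sum_xorZero_firstTwoBits (G : Bool × Bool → ℝ) :
    ∑ x : XorZero, G (firstTwoBits (.inl x)) = ∑ p, G p :=
  Fintype.sum_bijective _ (by decide) _ _ fun _ => rfl

theorem sum_b3_firstTwoBits (G : Bool × Bool → ℝ) :
    ∑ z : B3, G (firstTwoBits (.inr z)) = 2 * ∑ p, G p := by
  simp only [firstTwoBits, bits, Fintype.sum_prod_type, sum_const, card_univ, Fintype.card_bool,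
    mul_sum, nsmul_eq_mul, Nat.cast_ofNat]

omit [Fintype E] [DecidableEq E] in
theorem sum_massXor_mul_eq_sum_massAll_mul (e : E) (G : Bool × Bool → ℝ) :
    ∑ x, massXor e x * G (firstTwoBits (.inl x))
      = ∑ z, massAll e z * G (firstTwoBits (.inr z)) := by
  simp only [massXor, massAll, ← mul_sum, sum_xorZero_firstTwoBits, sum_b3_firstTwoBits]
  ring

omit [Fintype E] [DecidableEq E] in
theorem sum_massXor (e : E) : ∑ x, massXor e x = 1 := by
  simp [massXor, show Fintype.card XorZero = 4 from rfl]

def pairEvent (U V : Set (E → Bool)) : Set (E → Bool × Bool) :=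
  {q | (fun e => (q e).1) ∈ U ∧ (fun e => (q e).2) ∈ V}

theorem PrOf_preimage {Ω β : Type*} [Fintype Ω] (m : Ω → ℝ) (f : Ω → β) (S : Set β) :
    PrOf m (f ⁻¹' S) = ∑ x, m x * S.indicator 1 (f x) := by
  refine sum_congr rfl fun x _ => ?_
  by_cases hx : f x ∈ S <;> simp [hx]

theorem PrOf_coordEvent₂ (U V : Set (E → Bool)) (m : (E → XorZero ⊕ B3) → ℝ) :
    PrOf m (CoordEvent₂ U V)
      = ∑ C, m C * (pairEvent U V).indicator 1 (fun e => firstTwoBits (C e)) :=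
  PrOf_preimage m (fun C e => firstTwoBits (C e)) (pairEvent U V)

theorem colored_pairwise_general
    (U V : Set (E → Bool))
    (T : GTree E (fun _ => XorZero) (fun _ => B3)) (hT : T.complete Finset.univ) :
    PrOf (mass1 (massXor (E := E))) (CoordEvent₂ U V)
        = PrOf (T.mass massXor massAll) (CoordEvent₂ U V) ∧
      PrOf (T.mass massXor massAll) (CoordEvent₂ U V)
        = PrOf (mass2 (massAll (E := E))) (CoordEvent₂ U V) := by
  simp only [PrOf_coordEvent₂]
  exact ⟨(T.sum_mass_mul_eq_mass1 _ sum_massXor_mul_eq_sum_massAll_mul sum_massXor hT _).symm,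
    T.sum_mass_mul_eq_mass2 _ sum_massXor_mul_eq_sum_massAll_mul sum_massXor hT _⟩

/-- Pairwise part of the decision tree colored-percolation theorem:
`P(C₁ ∈ U×V) = P(C ∈ U×V) = P(C₂ ∈ U×V)`. -/
theorem colored_pairwise
    (U V : Set (E → Bool)) (hU : UpwardClosed U) (hV : UpwardClosed V)
    (T : GTree E (fun _ => XorZero) (fun _ => B3)) (hT : T.complete Finset.univ) :
    PrOf (mass1 (massXor (E := E))) (CoordEvent₂ U V)
        = PrOf (T.mass massXor massAll) (CoordEvent₂ U V) ∧
      PrOf (T.mass massXor massAll) (CoordEvent₂ U V)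
        = PrOf (mass2 (massAll (E := E))) (CoordEvent₂ U V) :=
  colored_pairwise_general U V T hT

end GenDT
end

section
/- Let G=(V,E) be a locally finite connected simple graph with Bernoulli bond percolation and let a,b∈V be distinct vertices. For n≥1, let ab^{□n} denote the event that there exist n pairwise edge-disjoint paths from a to b all of whose edges are open. Then for all n,m≥1, P(ab^{□(n+m)}) ≤ P(ab^{□n})·P(ab^{□m}). -/
/-!
The `n + m` paths split into `n` and `m` paths on disjoint edge sets, so `ab^{□(n+m)}` is
contained in the disjoint occurrence `ab^{□n} □ ab^{□m}`, and the claim is the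
van den Berg–Kesten inequality for these increasing events. Both are unions of events "all edges
of a finite set are open"; restricting to those finite sets inside a finite edge set `s` and
letting `s` grow (the graph is countable) reduces the inequality to increasing events `A`, `B`
on `{0,1}^s`.

There we double the configuration: `B` is read from a second independent copy on `J ⊆ s` and
from the first copy elsewhere, and the witnesses of `A` and `B` must be disjoint off `J`. For
`J = ∅` this is `A □ B`, for `J = s` it is `A × B`. Adding a coordinate `i` to `J` does not
decrease the probability: on each fibre of the coordinates other than `i`, the event either
grows or its image under swapping the two copies at `i`, which preserves the product measure,
lands in the new event.
-/

open MeasureTheory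
open scoped ENNReal

namespace PercG

variable {V : Type*} (G : SimpleGraph V)

/-- The spanning subgraph of `G` whose edges are the open edges of the
configuration `C`. -/
def openSubgraph (C : G.edgeSet → Bool) : SimpleGraph V :=
  SimpleGraph.fromEdgeSet {s | ∃ h : s ∈ G.edgeSet, C ⟨s, h⟩ = true}

/-- The event that `a` and `b` lie in the same open cluster. -/
def conn (a b : V) : Set (G.edgeSet → Bool) :=
  {C | (openSubgraph G C).Reachable a b}

/-- `μ` is the Bernoulli bond percolation measure with edge probabilities `p`:
it gives every cylinder event the corresponding product probability. -/
def IsBernoulliPercolation (p : G.edgeSet → ℝ) (μ : Measure (G.edgeSet → Bool)) : Prop :=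
  ∀ (s : Finset G.edgeSet) (f : G.edgeSet → Bool),
    μ {C | ∀ e ∈ s, C e = f e} =
      ∏ e ∈ s, ENNReal.ofReal (if f e then p e else 1 - p e)

/-- The event `ab^{□n}`: there exist `n` pairwise edge-disjoint paths from `a` to `b`
all of whose edges are open. -/
def nConn (a b : V) (n : ℕ) : Set (G.edgeSet → Bool) :=
  {C | ∃ P : Fin n → G.Walk a b,
        (∀ i, (P i).IsPath) ∧
        (∀ i, ∀ e ∈ (P i).edges, ∀ h : e ∈ G.edgeSet, C ⟨e, h⟩ = true) ∧
        (∀ i j, i ≠ j → ∀ e, e ∈ (P i).edges → e ∉ (P j).edges)}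

section ProdMass

variable {κ β : Type*} [Fintype κ] [DecidableEq κ] [Fintype β]

noncomputable def prodMass (w : κ → β → ℝ≥0∞) (A : Set (κ → β)) : ℝ≥0∞ :=
  ∑ g, A.indicator (fun g => ∏ i, w i (g i)) g

lemma prodMass_univ (w : κ → β → ℝ≥0∞) (hw : ∀ i, ∑ b, w i b = 1) :
    prodMass w Set.univ = 1 := by
  simp only [prodMass, Set.indicator_univ, ← Fintype.prod_sum, hw, Finset.prod_const_one]

lemma prodMass_prod {γ : Type*} [Fintype γ] (w : κ → β → ℝ≥0∞) (w' : κ → γ → ℝ≥0∞)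
    (s : Set (κ → β)) (t : Set (κ → γ)) :
    prodMass (fun i v => w i v.1 * w' i v.2) {g | Prod.fst ∘ g ∈ s ∧ Prod.snd ∘ g ∈ t} =
      prodMass w s * prodMass w' t := by
  rw [prodMass, ← (Equiv.arrowProdEquivProdArrow κ _ _).symm.sum_comp, Fintype.sum_prod_type,
    prodMass, prodMass, Finset.sum_mul_sum]
  refine Finset.sum_congr rfl fun σ _ => Finset.sum_congr rfl fun τ _ => ?_
  simp only [Set.indicator, Set.mem_ofPred_eq, Finset.prod_mul_distrib]
  split_ifs <;> simp_all [Equiv.arrowProdEquivProdArrow, Function.comp_def]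

lemma prodMass_le_of_involutive (w : κ → β → ℝ≥0∞) {A B : Set (κ → β)}
    {Φ : (κ → β) → (κ → β)} (hΦ : Function.Involutive Φ)
    (hw : ∀ g, ∏ i, w i (Φ g i) = ∏ i, w i (g i)) (hAB : ∀ g ∈ A, Φ g ∈ B) :
    prodMass w A ≤ prodMass w B := by
  rw [prodMass, ← Equiv.sum_comp (hΦ.toPerm Φ)]
  refine Finset.sum_le_sum fun g _ => ?_
  by_cases hg : Φ g ∈ A
  · have hgB : g ∈ B := hΦ g ▸ hAB _ hg
    simp [Set.indicator_of_mem hg, Set.indicator_of_mem hgB, hw]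
  · simp [Set.indicator_of_notMem hg]

lemma prodMass_le_of_update_or_update_swap (w : κ → β → ℝ≥0∞) (i : κ)
    {A B : Set (κ → β × β)}
    (hAB : ∀ g, (∀ v, Function.update g i v ∈ A → Function.update g i v ∈ B) ∨
      (∀ v, Function.update g i v ∈ A → Function.update g i v.swap ∈ B)) :
    prodMass (fun j v => w j v.1 * w j v.2) A ≤ prodMass (fun j v => w j v.1 * w j v.2) B := by
  classical
  let keep (g : κ → β × β) : Prop := ∀ v, Function.update g i v ∈ A → Function.update g i v ∈ B
  have keep_update (g v) : keep (Function.update g i v) ↔ keep g := by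
    simp only [keep, Function.update_idem]
  let Φ g := if keep g then g else Function.update g i (g i).swap
  refine prodMass_le_of_involutive _ (Φ := Φ) (fun g => ?_) (fun g => ?_) (fun g hg => ?_)
  · by_cases hg : keep g
    · simp [Φ, hg]
    · simp [Φ, hg, keep_update]
  · by_cases hg : keep g
    · simp [Φ, hg]
    · refine Finset.prod_congr rfl fun j _ => ?_
      rcases eq_or_ne j i with rfl | hj
      · simp [Φ, hg, mul_comm]
      · simp [Φ, hg, hj]
  · by_cases hkeep : keep g
    · simpa [Φ, hkeep] using hkeep (g i) (by simpa using hg)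
    · have := (hAB g).resolve_left hkeep (g i)
      simp only [Function.update_eq_self] at this
      simpa [Φ, hkeep] using this hg

end ProdMass

def disjOcc {α : Type*} [Lattice α] [OrderBot α] (A B : Set α) : Set α :=
  {x | ∃ a ∈ A, ∃ b ∈ B, Disjoint a b ∧ a ⊔ b ≤ x}

section Doubling

variable {κ : Type*} [DecidableEq κ]

def IsSplitWitness (J : Finset κ) (g : κ → Bool × Bool) (σ τ : κ → Bool) : Prop :=
  σ ≤ Prod.fst ∘ g ∧ τ ≤ J.piecewise (Prod.snd ∘ g) (Prod.fst ∘ g) ∧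
    ∀ i ∉ J, Disjoint (σ i) (τ i)

def splitDisjOcc (J : Finset κ) (A B : Set (κ → Bool)) : Set (κ → Bool × Bool) :=
  {g | ∃ σ ∈ A, ∃ τ ∈ B, IsSplitWitness J g σ τ}

variable {J : Finset κ} {g : κ → Bool × Bool} {σ τ : κ → Bool} {i : κ}

lemma IsSplitWitness.apply_of_notMem (h : IsSplitWitness J g σ τ) (hi : i ∉ J) :
    σ i ⊔ τ i ≤ (g i).1 ∧ Disjoint (σ i) (τ i) :=
  ⟨sup_le (h.1 i) (by simpa [hi] using h.2.1 i), h.2.2 i hi⟩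

lemma IsSplitWitness.update_insert (h : IsSplitWitness J g σ τ) {u : Bool × Bool}
    (hu : (σ i, τ i) ≤ u) : IsSplitWitness (insert i J) (Function.update g i u) σ τ := by
  refine ⟨fun j => ?_, fun j => ?_,
    fun j hj => h.2.2 j fun hjJ => hj (Finset.mem_insert_of_mem hjJ)⟩
  · rcases eq_or_ne j i with rfl | hj
    · simpa using hu.1
    · simpa [hj] using h.1 j
  · rcases eq_or_ne j i with rfl | hj
    · simpa using hu.2
    · rw [Finset.piecewise_insert_of_ne _ _ _ hj]
      simpa [Finset.piecewise, hj] using h.2.1 j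

variable {A B : Set (κ → Bool)}

lemma update_mem_splitDisjOcc_insert_or (hi : i ∉ J) (g : κ → Bool × Bool) :
    (∀ v, Function.update g i v ∈ splitDisjOcc J A B →
      Function.update g i v ∈ splitDisjOcc (insert i J) A B) ∨
    (∀ v, Function.update g i v ∈ splitDisjOcc J A B →
      Function.update g i v.swap ∈ splitDisjOcc (insert i J) A B) := by
  -- Keeping `v` can only fail for `v = (true, false)` with `τ i = true`. If it fails there, no
  -- witness uses `σ i`, so swapping the two copies at `i` hands `τ i` to the second copy.
  have transfer {v u : Bool × Bool} {σ τ : κ → Bool} (hσ : σ ∈ A) (hτ : τ ∈ B)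
      (h : IsSplitWitness J (Function.update g i v) σ τ) (hu : (σ i, τ i) ≤ u) :
      Function.update g i u ∈ splitDisjOcc (insert i J) A B :=
    ⟨σ, hσ, τ, hτ, by simpa using h.update_insert hu⟩
  by_cases h : Function.update g i (true, false) ∈ splitDisjOcc (insert i J) A B
  · refine .inl fun v ⟨σ, hσ, τ, hτ, hw⟩ => ?_
    have hv := hw.apply_of_notMem hi
    simp only [Function.update_self, sup_le_iff] at hv
    by_cases hτv : τ i ≤ v.2
    · exact transfer hσ hτ hw ⟨hv.1.1, hτv⟩
    · obtain ⟨v1, v2⟩ := v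
      obtain rfl : v1 = true := by revert hv hτv; cases τ i <;> cases v1 <;> simp
      obtain rfl : v2 = false := by revert hτv; cases v2 <;> simp
      exact h
  · refine .inr fun v ⟨σ, hσ, τ, hτ, hw⟩ => ?_
    have hv := hw.apply_of_notMem hi
    simp only [Function.update_self, sup_le_iff] at hv
    by_cases hσv : σ i ≤ v.2
    · exact transfer hσ hτ hw ⟨hσv, hv.1.2⟩
    · refine absurd (transfer hσ hτ hw ?_) h
      revert hv hσv; cases σ i <;> cases τ i <;> simp

lemma splitDisjOcc_empty (A B : Set (κ → Bool)) :
    splitDisjOcc ∅ A B = {g | Prod.fst ∘ g ∈ disjOcc A B ∧ Prod.snd ∘ g ∈ Set.univ} := by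
  ext g
  simp only [splitDisjOcc, IsSplitWitness, disjOcc, Finset.piecewise_empty, Finset.notMem_empty,
    not_false_eq_true, forall_const, Pi.disjoint_iff, sup_le_iff, Set.mem_univ, and_true]
  grind

lemma splitDisjOcc_univ [Fintype κ] (hA : IsUpperSet A) (hB : IsUpperSet B) :
    splitDisjOcc Finset.univ A B = {g | Prod.fst ∘ g ∈ A ∧ Prod.snd ∘ g ∈ B} := by
  ext g
  simp only [splitDisjOcc, IsSplitWitness, Finset.piecewise_univ, Finset.mem_univ,
    not_true_eq_false, IsEmpty.forall_iff, implies_true, and_true]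
  constructor
  · rintro ⟨σ, hσ, τ, hτ, hσg, hτg⟩
    exact ⟨hA hσg hσ, hB hτg hτ⟩
  · rintro ⟨hgA, hgB⟩
    exact ⟨_, hgA, _, hgB, le_rfl, le_rfl⟩

end Doubling

section FiniteBK

variable {κ : Type*} [Fintype κ] [DecidableEq κ] {A B : Set (κ → Bool)}

theorem prodMass_disjOcc_le (w : κ → Bool → ℝ≥0∞) (hw : ∀ i, ∑ b, w i b = 1)
    (hA : IsUpperSet A) (hB : IsUpperSet B) :
    prodMass w (disjOcc A B) ≤ prodMass w A * prodMass w B := by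
  have step (J : Finset κ) : prodMass (fun i v => w i v.1 * w i v.2) (splitDisjOcc ∅ A B) ≤
      prodMass (fun i v => w i v.1 * w i v.2) (splitDisjOcc J A B) := by
    induction J using Finset.induction_on with
    | empty => exact le_rfl
    | insert i J hi ih =>
      exact ih.trans (prodMass_le_of_update_or_update_swap w i
        (update_mem_splitDisjOcc_insert_or hi))
  simpa only [splitDisjOcc_empty, splitDisjOcc_univ hA hB, prodMass_prod, prodMass_univ w hw,
    mul_one] using step Finset.univ

end FiniteBK

section Restrict

variable {κ : Type*}

lemma _root_.IsUpperSet.image_restrict {α : Type*} [Preorder α] {A : Set (κ → α)}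
    (hA : IsUpperSet A) (s : Finset κ) : IsUpperSet (s.restrict '' A) := by
  classical
  rintro _ g hle ⟨C, hC, rfl⟩
  refine ⟨fun e => if h : e ∈ s then g ⟨e, h⟩ else C e, hA (fun e => ?_) hC, ?_⟩
  · by_cases h : e ∈ s
    · simpa [h] using hle ⟨e, h⟩
    · simp [h]
  · funext e
    simp [Finset.restrict]

lemma image_restrict_disjOcc_subset {α : Type*} [Lattice α] [OrderBot α] (s : Finset κ)
    (A B : Set (κ → α)) :
    s.restrict '' disjOcc A B ⊆ disjOcc (s.restrict '' A) (s.restrict '' B) := by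
  rintro _ ⟨C, ⟨σ, hσ, τ, hτ, hdisj, hle⟩, rfl⟩
  exact ⟨_, ⟨σ, hσ, rfl⟩, _, ⟨τ, hτ, rfl⟩,
    Pi.disjoint_iff.2 fun e => Pi.disjoint_iff.1 hdisj e, fun e => hle e⟩

end Restrict

section Bernoulli

variable {κ : Type*} {p : κ → ℝ} {μ : Measure (κ → Bool)}

noncomputable def bernoulliWeight (p : κ → ℝ) (e : κ) (b : Bool) : ℝ≥0∞ :=
  ENNReal.ofReal (if b then p e else 1 - p e)

def IsBernoulliProduct (p : κ → ℝ) (μ : Measure (κ → Bool)) : Prop :=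
  ∀ (s : Finset κ) (f : κ → Bool),
    μ {C | ∀ e ∈ s, C e = f e} = ∏ e ∈ s, bernoulliWeight p e (f e)

lemma sum_bernoulliWeight {e : κ} (hp : 0 ≤ p e ∧ p e ≤ 1) : ∑ b, bernoulliWeight p e b = 1 := by
  simp [bernoulliWeight, ← ENNReal.ofReal_add hp.1 (sub_nonneg.2 hp.2)]

lemma IsBernoulliProduct.measure_restrict_preimage_singleton (hμ : IsBernoulliProduct p μ)
    (s : Finset κ) (g : s → Bool) :
    μ (s.restrict ⁻¹' ({g} : Set (s → Bool))) = ∏ e : s, bernoulliWeight p e (g e) := by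
  classical
  let f : κ → Bool := fun e => if h : e ∈ s then g ⟨e, h⟩ else false
  have hcyl : s.restrict ⁻¹' ({g} : Set (s → Bool)) = {C | ∀ e ∈ s, C e = f e} := by
    ext C
    simp +contextual [funext_iff, f, Finset.restrict]
  rw [hcyl, hμ, ← Finset.prod_coe_sort]
  simp [f]

lemma IsBernoulliProduct.measure_restrict_preimage [DecidableEq κ] (hμ : IsBernoulliProduct p μ)
    (s : Finset κ) (A : Set (s → Bool)) :
    μ (s.restrict ⁻¹' A) = prodMass (fun e : s => bernoulliWeight p e) A := by
  classical
  calc μ (s.restrict ⁻¹' A) = μ (s.restrict ⁻¹' ↑(Finset.univ.filter (· ∈ A))) := by simp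
    _ = ∑ g ∈ Finset.univ.filter (· ∈ A), μ (s.restrict ⁻¹' ({g} : Set (s → Bool))) :=
      (sum_measure_preimage_singleton _ fun g _ =>
        Finset.measurable_restrict s (measurableSet_singleton g)).symm
    _ = prodMass (fun e : s => bernoulliWeight p e) A := by
      simp only [Finset.sum_filter, hμ.measure_restrict_preimage_singleton, prodMass,
        Set.indicator_apply]

theorem IsBernoulliProduct.measure_disjOcc_le (hμ : IsBernoulliProduct p μ)
    (hp : ∀ e, 0 ≤ p e ∧ p e ≤ 1) (s : Finset κ) {A B : Set (κ → Bool)}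
    (hA : IsUpperSet A) (hB : IsUpperSet B)
    (hAs : s.restrict ⁻¹' (s.restrict '' A) ⊆ A) (hBs : s.restrict ⁻¹' (s.restrict '' B) ⊆ B) :
    μ (disjOcc A B) ≤ μ A * μ B := by
  classical
  have hμS {S : Set (κ → Bool)} (hS : s.restrict ⁻¹' (s.restrict '' S) ⊆ S) :
      μ S = prodMass (fun e : s => bernoulliWeight p e) (s.restrict '' S) := by
    rw [← hμ.measure_restrict_preimage, hS.antisymm (Set.subset_preimage_image _ _)]
  calc μ (disjOcc A B) ≤ μ (s.restrict ⁻¹' disjOcc (s.restrict '' A) (s.restrict '' B)) :=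
        measure_mono ((Set.subset_preimage_image _ _).trans
          (Set.preimage_mono (image_restrict_disjOcc_subset s A B)))
    _ = prodMass (fun e : s => bernoulliWeight p e) (disjOcc (s.restrict '' A) (s.restrict '' B)) :=
        hμ.measure_restrict_preimage s _
    _ ≤ prodMass (fun e : s => bernoulliWeight p e) (s.restrict '' A) *
          prodMass (fun e : s => bernoulliWeight p e) (s.restrict '' B) :=
        prodMass_disjOcc_le _ (fun e => sum_bernoulliWeight (hp e)) (hA.image_restrict s)
          (hB.image_restrict s)
    _ = μ A * μ B := by rw [hμS hAs, hμS hBs]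

end Bernoulli

section Witnessed

variable {κ X Y Z : Type*}

def witnessed (F : X → Set κ) : Set (κ → Bool) :=
  {C | ∃ x, ∀ e ∈ F x, C e = true}

def witnessedWithin (F : X → Set κ) (s : Set κ) : Set (κ → Bool) :=
  witnessed fun x : {x // F x ⊆ s} => F x

lemma isUpperSet_witnessed (F : X → Set κ) : IsUpperSet (witnessed F) := by
  rintro C C' hle ⟨x, hx⟩
  exact ⟨x, fun e he => Bool.le_iff_imp.1 (hle e) (hx e he)⟩

lemma witnessedWithin_subset (F : X → Set κ) (s : Set κ) : witnessedWithin F s ⊆ witnessed F :=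
  fun _ ⟨x, hx⟩ => ⟨x, hx⟩

lemma witnessedWithin_mono (F : X → Set κ) : Monotone (witnessedWithin F) :=
  fun _ _ hst _ ⟨x, hx⟩ => ⟨⟨x, x.2.trans hst⟩, hx⟩

lemma witnessed_eq_iUnion_witnessedWithin {F : X → Set κ} (hF : ∀ x, (F x).Finite) :
    witnessed F = ⋃ s : Finset κ, witnessedWithin F (s : Set κ) := by
  refine (Set.iUnion_subset fun s : Finset κ => witnessedWithin_subset F s).antisymm'
    fun C ⟨x, hx⟩ => Set.mem_iUnion.2 ⟨(hF x).toFinset, ⟨x, by simp⟩, hx⟩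

lemma restrict_preimage_image_witnessedWithin_subset (F : X → Set κ) (s : Finset κ) :
    s.restrict ⁻¹' (s.restrict '' witnessedWithin F s) ⊆ witnessedWithin F s := by
  rintro C ⟨C', ⟨x, hx⟩, hCC'⟩
  refine ⟨x, fun e he => ?_⟩
  have := congrFun hCC' ⟨e, x.2 he⟩
  simp only [Finset.restrict] at this
  rw [← this, hx e he]

lemma witnessedWithin_subset_disjOcc {F : X → Set κ} {F₁ : Y → Set κ} {F₂ : Z → Set κ}
    (hsplit : ∀ x, ∃ y z, Disjoint (F₁ y) (F₂ z) ∧ F₁ y ∪ F₂ z ⊆ F x) (s : Set κ) :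
    witnessedWithin F s ⊆ disjOcc (witnessedWithin F₁ s) (witnessedWithin F₂ s) := by
  classical
  rintro C ⟨⟨x, hxs⟩, hx⟩
  obtain ⟨y, z, hyz, hsub⟩ := hsplit x
  refine ⟨fun e => decide (e ∈ F₁ y), ⟨⟨y, fun e he => hxs (hsub (.inl he))⟩, by simp⟩,
    fun e => decide (e ∈ F₂ z), ⟨⟨z, fun e he => hxs (hsub (.inr he))⟩, by simp⟩,
    Pi.disjoint_iff.2 fun e => ?_, fun e => ?_⟩
  · by_cases h : e ∈ F₁ y
    · simp [h, Set.disjoint_left.1 hyz h, disjoint_iff]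
    · simp [h, disjoint_iff]
  · by_cases h : e ∈ F₁ y ∪ F₂ z
    · simp [hx e (hsub h)]
    · simp_all

theorem IsBernoulliProduct.measure_witnessed_le [Countable κ] {p : κ → ℝ}
    {μ : Measure (κ → Bool)} (hμ : IsBernoulliProduct p μ) (hp : ∀ e, 0 ≤ p e ∧ p e ≤ 1)
    {F : X → Set κ} (hF : ∀ x, (F x).Finite) {F₁ : Y → Set κ} {F₂ : Z → Set κ}
    (hsplit : ∀ x, ∃ y z, Disjoint (F₁ y) (F₂ z) ∧ F₁ y ∪ F₂ z ⊆ F x) :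
    μ (witnessed F) ≤ μ (witnessed F₁) * μ (witnessed F₂) := by
  have hmono : Monotone fun s : Finset κ => witnessedWithin F s :=
    fun _ _ hst => witnessedWithin_mono F (Finset.coe_subset.2 hst)
  rw [witnessed_eq_iUnion_witnessedWithin hF, hmono.measure_iUnion]
  refine iSup_le fun s => ?_
  calc μ (witnessedWithin F s)
      ≤ μ (disjOcc (witnessedWithin F₁ s) (witnessedWithin F₂ s)) :=
        measure_mono (witnessedWithin_subset_disjOcc hsplit s)
    _ ≤ μ (witnessedWithin F₁ s) * μ (witnessedWithin F₂ s) :=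
        hμ.measure_disjOcc_le hp s (isUpperSet_witnessed _) (isUpperSet_witnessed _)
          (restrict_preimage_image_witnessedWithin_subset F₁ s)
          (restrict_preimage_image_witnessedWithin_subset F₂ s)
    _ ≤ μ (witnessed F₁) * μ (witnessed F₂) :=
        mul_le_mul' (measure_mono (witnessedWithin_subset _ _))
          (measure_mono (witnessedWithin_subset _ _))

end Witnessed

theorem _root_.SimpleGraph.Connected.countable_of_locallyFinite {G : SimpleGraph V}
    (hconn : G.Connected) (hlf : G.LocallyFinite) : Countable V := by
  obtain ⟨a⟩ := hconn.nonempty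
  have hfin (n : ℕ) : {v | ∃ w : G.Walk v a, w.length = n}.Finite := by
    induction n with
    | zero =>
      refine (Set.finite_singleton a).subset fun v ⟨w, hw⟩ => ?_
      exact SimpleGraph.Walk.eq_of_length_eq_zero hw
    | succ n ih =>
      refine (ih.biUnion fun u _ => have := hlf u; (G.neighborSet u).toFinite).subset ?_
      rintro v ⟨_ | ⟨h, w⟩, hw⟩
      · simp at hw
      · exact Set.mem_biUnion ⟨w, by simpa using hw⟩ h.symm
  have hcover : Set.univ ⊆ ⋃ n, {v | ∃ w : G.Walk v a, w.length = n} := fun v _ =>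
    have ⟨w⟩ := hconn.preconnected v a
    Set.mem_iUnion.2 ⟨w.length, w, rfl⟩
  exact Set.countable_univ_iff.1 ((Set.countable_iUnion fun n => (hfin n).countable).mono hcover)

section Paths

def EdgeDisjointPaths (a b : V) (ι : Type*) : Type _ :=
  {P : ι → G.Walk a b // (∀ i, (P i).IsPath) ∧
    ∀ i j, i ≠ j → ∀ e, e ∈ (P i).edges → e ∉ (P j).edges}

def usedEdges {a b : V} {ι : Type*} (P : ι → G.Walk a b) : Set G.edgeSet :=
  {e | ∃ i, e.1 ∈ (P i).edges}

variable {G} {a b : V} {ι : Type*}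

lemma usedEdges_finite [Finite ι] (P : ι → G.Walk a b) : (usedEdges G P).Finite :=
  (Set.finite_iUnion fun i => (P i).edges.finite_toSet.preimage Subtype.val_injective.injOn).subset
    fun _ ⟨i, hi⟩ => Set.mem_iUnion.2 ⟨i, hi⟩

lemma nConn_eq_witnessed (n : ℕ) :
    nConn G a b n = witnessed fun P : EdgeDisjointPaths G a b (Fin n) => usedEdges G P.1 := by
  ext C
  constructor
  · rintro ⟨P, hpath, hopen, hdisj⟩
    exact ⟨⟨P, hpath, hdisj⟩, fun e ⟨i, hi⟩ => hopen i e.1 hi e.2⟩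
  · rintro ⟨⟨P, hpath, hdisj⟩, hopen⟩
    exact ⟨P, hpath, fun i e he h => hopen ⟨e, h⟩ ⟨i, he⟩, hdisj⟩

def EdgeDisjointPaths.comp {ι' : Type*} (P : EdgeDisjointPaths G a b ι) {f : ι' → ι}
    (hf : Function.Injective f) : EdgeDisjointPaths G a b ι' :=
  ⟨P.1 ∘ f, fun i => P.2.1 (f i), fun _ _ hij => P.2.2 _ _ (hf.ne hij)⟩

lemma usedEdges_comp_subset {ι' : Type*} (P : ι → G.Walk a b) (f : ι' → ι) :
    usedEdges G (P ∘ f) ⊆ usedEdges G P :=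
  fun _ ⟨i, hi⟩ => ⟨f i, hi⟩

lemma EdgeDisjointPaths.disjoint_usedEdges_comp {ι₁ ι₂ : Type*} (P : EdgeDisjointPaths G a b ι)
    {f : ι₁ → ι} {g : ι₂ → ι} (hfg : ∀ i j, f i ≠ g j) :
    Disjoint (usedEdges G (P.1 ∘ f)) (usedEdges G (P.1 ∘ g)) :=
  Set.disjoint_left.2 fun _ ⟨i, hi⟩ ⟨j, hj⟩ => P.2.2 _ _ (hfg i j) _ hi hj

lemma EdgeDisjointPaths.exists_split {n m : ℕ} (P : EdgeDisjointPaths G a b (Fin (n + m))) :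
    ∃ (P₁ : EdgeDisjointPaths G a b (Fin n)) (P₂ : EdgeDisjointPaths G a b (Fin m)),
      Disjoint (usedEdges G P₁.1) (usedEdges G P₂.1) ∧
        usedEdges G P₁.1 ∪ usedEdges G P₂.1 ⊆ usedEdges G P.1 := by
  refine ⟨P.comp (Fin.castAdd_injective n m), P.comp (Fin.natAdd_injective m n),
    P.disjoint_usedEdges_comp fun i j h => ?_,
    Set.union_subset (usedEdges_comp_subset P.1 _) (usedEdges_comp_subset P.1 _)⟩
  have := congrArg Fin.val h
  simp only [Fin.val_castAdd, Fin.val_natAdd] at this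
  omega

end Paths

theorem nConn_submultiplicative
    (hlf : G.LocallyFinite) (hconn : G.Connected)
    (a b : V)
    (p : G.edgeSet → ℝ) (hp : ∀ e, 0 ≤ p e ∧ p e ≤ 1)
    (μ : Measure (G.edgeSet → Bool))
    (hμ : IsBernoulliPercolation G p μ)
    (n m : ℕ) :
    μ (nConn G a b (n + m)) ≤ μ (nConn G a b n) * μ (nConn G a b m) := by
  have : Countable V := hconn.countable_of_locallyFinite hlf
  simp only [nConn_eq_witnessed]
  exact IsBernoulliProduct.measure_witnessed_le hμ hp
    (fun P : EdgeDisjointPaths G a b (Fin (n + m)) => usedEdges_finite P.1)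
    EdgeDisjointPaths.exists_split

end PercG
end
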